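/- arXiv:2001.03873 — 2 statements merged into one kernel-verified Lean document; each statement's English description precedes it below -/
import Mathlib

section
/- Gronwall inequality of Volterra type: Let f ∈ L¹_loc(ℝ₊; ℝ₊) and T > 0. Suppose that for some γ, β ∈ [0,1) and constants C₁, C₂ > 0, f(t) ≤ C₁ t^{-β} + C₂ ∫₀^t (t-s)^{-γ} f(s) ds for all t ∈ (0,T]. Then there exists a constant C₃ = C₃(C₂, T, γ, β) > 0 such that f(t) ≤ C₃ C₁ t^{-β} for all t ∈ (0,T]. -/
open MeasureTheory Set
open scoped ENNReal

/-!
Normalise `C₁ = 1` and work with `g = ofReal ∘ f : ℝ → ℝ≥0∞` and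
`volterraConv a g t = ∫₀ᵗ (t - s) ^ a g(s) ds`.

A priori `L¹` bound: in Bielecki's weighted norm `∫₀ᵀ e^{-rt} g(t) dt` the Volterra term has
norm at most `C₂ Γ(1 - γ) r^{γ - 1} ≤ 1/2` for `r` large, so `∫₀ᵀ g` is bounded in terms of the
data only.

Bootstrap: inserting the inequality into `volterraConv a g` and using the Beta-type bound
`∫ᵣᵗ (t - s)^p (s - r)^q ds ≤ B(p, q) (t - r)^{p + q + 1}` bounds `volterraConv a g` by
`t^{-β}` times a constant plus a multiple of `volterraConv (a + 1 - γ) g`. After finitely many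
steps the exponent is nonnegative, the kernel is bounded and the `L¹` bound applies; descending
again gives `∫₀ᵗ (t - s)^{-γ} f(s) ds ≤ K C₁ t^{-β}`, which the hypothesis turns into the claim.
-/

lemma lintegral_Ioc_ofReal_rpow_sub_right {a b q : ℝ} (hq : -1 < q) (hab : a ≤ b) :
    ∫⁻ s in Ioc a b, ENNReal.ofReal ((s - a) ^ q)
      = ENNReal.ofReal ((b - a) ^ (q + 1) / (q + 1)) := by
  have hint : IntervalIntegrable (fun s : ℝ => (s - a) ^ q) volume a b := by
    simpa using
      (intervalIntegral.intervalIntegrable_rpow' (a := a - a) (b := b - a) hq).comp_sub_right a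
  have hnonneg : 0 ≤ᵐ[volume.restrict (Ioc a b)] fun s : ℝ => (s - a) ^ q := by
    filter_upwards [ae_restrict_mem measurableSet_Ioc] with s hs
    exact Real.rpow_nonneg (by linarith [hs.1]) _
  rw [← ofReal_integral_eq_lintegral_ofReal hint.1 hnonneg, ← intervalIntegral.integral_of_le hab,
    intervalIntegral.integral_comp_sub_right (fun x => x ^ q) a, sub_self,
    integral_rpow (Or.inl hq), Real.zero_rpow (by linarith), sub_zero]

lemma lintegral_Ioc_ofReal_rpow_sub_left {a b p : ℝ} (hp : -1 < p) (hab : a ≤ b) :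
    ∫⁻ s in Ioc a b, ENNReal.ofReal ((b - s) ^ p)
      = ENNReal.ofReal ((b - a) ^ (p + 1) / (p + 1)) := by
  have hint : IntervalIntegrable (fun s : ℝ => (b - s) ^ p) volume a b := by
    simpa using
      ((intervalIntegral.intervalIntegrable_rpow' (a := b - b) (b := b - a) hp).comp_sub_left
        b).symm
  have hnonneg : 0 ≤ᵐ[volume.restrict (Ioc a b)] fun s : ℝ => (b - s) ^ p := by
    filter_upwards [ae_restrict_mem measurableSet_Ioc] with s hs
    exact Real.rpow_nonneg (by linarith [hs.2]) _
  rw [← ofReal_integral_eq_lintegral_ofReal hint.1 hnonneg, ← intervalIntegral.integral_of_le hab,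
    intervalIntegral.integral_comp_sub_left (fun x => x ^ p) b, sub_self,
    integral_rpow (Or.inl hp), Real.zero_rpow (by linarith), sub_zero]

noncomputable def betaBound (p q : ℝ) : ℝ :=
  2 ^ (-p) / (q + 1) + 2 ^ (-q) / (p + 1)

lemma betaBound_pos {p q : ℝ} (hp : -1 < p) (hq : -1 < q) : 0 < betaBound p q := by
  have : 0 < p + 1 := by linarith
  have : 0 < q + 1 := by linarith
  unfold betaBound; positivity

-- One of `x, y` is at least `(x + y) / 2`, and `x ↦ x ^ p` is antitone for `p ≤ 0`.
lemma rpow_mul_rpow_le_of_nonpos {p q x y : ℝ} (hp : p ≤ 0) (hq : q ≤ 0) (hx : 0 ≤ x) (hy : 0 ≤ y)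
    (hxy : 0 < x + y) :
    x ^ p * y ^ q ≤ ((x + y) / 2) ^ p * y ^ q + x ^ p * ((x + y) / 2) ^ q := by
  have hx' := Real.rpow_nonneg hx p
  have hy' := Real.rpow_nonneg hy q
  rcases le_total ((x + y) / 2) x with h | h
  · have := Real.rpow_le_rpow_of_nonpos (by linarith) h hp
    nlinarith [Real.rpow_nonneg (by linarith : (0:ℝ) ≤ (x + y) / 2) q]
  · have := Real.rpow_le_rpow_of_nonpos (by linarith) (by linarith : (x + y) / 2 ≤ y) hq
    nlinarith [Real.rpow_nonneg (by linarith : (0:ℝ) ≤ (x + y) / 2) p]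

lemma lintegral_Ioc_rpow_mul_rpow_le {p q r t : ℝ} (hp : -1 < p) (hp0 : p ≤ 0) (hq : -1 < q)
    (hq0 : q ≤ 0) (hrt : r ≤ t) :
    ∫⁻ s in Ioc r t, ENNReal.ofReal ((t - s) ^ p * (s - r) ^ q)
      ≤ ENNReal.ofReal (betaBound p q * (t - r) ^ (p + q + 1)) := by
  rcases hrt.eq_or_lt with rfl | hrt
  · simp
  have hd : 0 < t - r := sub_pos.mpr hrt
  have hp1 : 0 < p + 1 := by linarith
  have hq1 : 0 < q + 1 := by linarith
  calc ∫⁻ s in Ioc r t, ENNReal.ofReal ((t - s) ^ p * (s - r) ^ q)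
      ≤ ∫⁻ s in Ioc r t, (ENNReal.ofReal (((t - r) / 2) ^ p) * ENNReal.ofReal ((s - r) ^ q)
          + ENNReal.ofReal (((t - r) / 2) ^ q) * ENNReal.ofReal ((t - s) ^ p)) := by
        refine setLIntegral_mono' measurableSet_Ioc fun s hs => ?_
        have hts := sub_nonneg.mpr hs.2
        have hsr := sub_nonneg.mpr hs.1.le
        rw [← ENNReal.ofReal_mul (by positivity), ← ENNReal.ofReal_mul (by positivity),
          ← ENNReal.ofReal_add (by positivity) (by positivity)]
        refine ENNReal.ofReal_le_ofReal ?_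
        have := rpow_mul_rpow_le_of_nonpos hp0 hq0 hts hsr (by linarith)
        rw [show t - s + (s - r) = t - r by ring] at this
        linarith
    _ = ENNReal.ofReal (((t - r) / 2) ^ p * ((t - r) ^ (q + 1) / (q + 1))
          + ((t - r) / 2) ^ q * ((t - r) ^ (p + 1) / (p + 1))) := by
        rw [lintegral_add_left (by fun_prop), lintegral_const_mul' _ _ ENNReal.ofReal_ne_top,
          lintegral_const_mul' _ _ ENNReal.ofReal_ne_top,
          lintegral_Ioc_ofReal_rpow_sub_right hq hrt.le,
          lintegral_Ioc_ofReal_rpow_sub_left hp hrt.le,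
          ← ENNReal.ofReal_mul (by positivity), ← ENNReal.ofReal_mul (by positivity),
          ← ENNReal.ofReal_add (by positivity) (by positivity)]
    _ = ENNReal.ofReal (betaBound p q * (t - r) ^ (p + q + 1)) := by
        congr 1
        simp only [betaBound, Real.div_rpow hd.le zero_le_two, Real.rpow_neg zero_le_two,
          Real.rpow_add hd, Real.rpow_one]
        field_simp

lemma lintegral_Ioc_lintegral_Ioc_swap {a b : ℝ} {F : ℝ → ℝ → ℝ≥0∞}
    (hF : Measurable (Function.uncurry F)) :
    ∫⁻ t in Ioc a b, ∫⁻ s in Ioc a t, F t s = ∫⁻ s in Ioc a b, ∫⁻ t in Ioc s b, F t s := by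
  set G := {z : ℝ × ℝ | z.2 ≤ z.1}.indicator (Function.uncurry F)
  have hG : Measurable G := hF.indicator (measurableSet_le measurable_snd measurable_fst)
  have inner_s : ∀ t ∈ Ioc a b, ∫⁻ s in Ioc a t, F t s = ∫⁻ s in Ioc a b, G (t, s) := by
    intro t ht
    have : (fun s => G (t, s)) = (Iic t).indicator (F t) := by
      ext s; by_cases h : s ≤ t <;> simp [G, h]
    rw [this, lintegral_indicator measurableSet_Iic, Measure.restrict_restrict measurableSet_Iic,
      inter_comm, Ioc_inter_Iic, inf_eq_right.mpr ht.2]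
  have inner_t : ∀ s ∈ Ioc a b, ∫⁻ t in Ioc a b, G (t, s) = ∫⁻ t in Ioc s b, F t s := by
    intro s hs
    have : (fun t => G (t, s)) = (Ici s).indicator (F · s) := by
      ext t; by_cases h : s ≤ t <;> simp [G, h]
    have hset : Ici s ∩ Ioc a b = Icc s b := by
      ext t; simp only [mem_inter_iff, mem_Ici, mem_Ioc, mem_Icc]
      exact ⟨fun h => ⟨h.1, h.2.2⟩, fun h => ⟨h.1, hs.1.trans_le h.1, h.2⟩⟩
    rw [this, lintegral_indicator measurableSet_Ici, Measure.restrict_restrict measurableSet_Ici,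
      hset, Measure.restrict_congr_set Ioc_ae_eq_Icc.symm]
  calc ∫⁻ t in Ioc a b, ∫⁻ s in Ioc a t, F t s
      = ∫⁻ t in Ioc a b, ∫⁻ s in Ioc a b, G (t, s) :=
        setLIntegral_congr_fun measurableSet_Ioc inner_s
    _ = ∫⁻ s in Ioc a b, ∫⁻ t in Ioc a b, G (t, s) := lintegral_lintegral_swap hG.aemeasurable
    _ = ∫⁻ s in Ioc a b, ∫⁻ t in Ioc s b, F t s :=
        setLIntegral_congr_fun measurableSet_Ioc inner_t

noncomputable def volterraConv (a : ℝ) (g : ℝ → ℝ≥0∞) (t : ℝ) : ℝ≥0∞ :=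
  ∫⁻ s in Ioc 0 t, ENNReal.ofReal ((t - s) ^ a) * g s

section volterraConv

variable {a t : ℝ} {g h : ℝ → ℝ≥0∞}

lemma volterraConv_mono_ae {T : ℝ} (hgh : g ≤ᵐ[volume.restrict (Ioc 0 T)] h) (htT : t ≤ T) :
    volterraConv a g t ≤ volterraConv a h t :=
  lintegral_mono_ae <| (ae_restrict_of_ae_restrict_of_subset (Ioc_subset_Ioc_right htT) hgh).mono
    fun _ hs => mul_le_mul_right hs _

lemma volterraConv_add (hg : Measurable g) :
    volterraConv a (fun s => g s + h s) t = volterraConv a g t + volterraConv a h t := by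
  simp only [volterraConv, mul_add]
  exact lintegral_add_left (by fun_prop) _

lemma volterraConv_const_mul {c : ℝ≥0∞} (hc : c ≠ ∞) :
    volterraConv a (fun s => c * g s) t = c * volterraConv a g t := by
  simp only [volterraConv, mul_left_comm _ c]
  exact lintegral_const_mul' _ _ hc

lemma volterraConv_le_mul_lintegral {T : ℝ} (ha : 0 ≤ a) (htT : t ≤ T) :
    volterraConv a g t ≤ ENNReal.ofReal (T ^ a) * ∫⁻ s in Ioc 0 T, g s := by
  calc volterraConv a g t ≤ ∫⁻ s in Ioc 0 t, ENNReal.ofReal (T ^ a) * g s := by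
        refine setLIntegral_mono' measurableSet_Ioc fun s hs => mul_le_mul_left ?_ _
        exact ENNReal.ofReal_le_ofReal
          (Real.rpow_le_rpow (by linarith [hs.2]) (by linarith [hs.1]) ha)
    _ ≤ ENNReal.ofReal (T ^ a) * ∫⁻ s in Ioc 0 T, g s := by
        rw [lintegral_const_mul' _ _ ENNReal.ofReal_ne_top]
        exact mul_le_mul_right (lintegral_mono_set (Ioc_subset_Ioc_right htT)) _

variable {p q : ℝ}

lemma volterraConv_rpow_le (hp : -1 < p) (hp0 : p ≤ 0) (hq : -1 < q) (hq0 : q ≤ 0) (ht : 0 ≤ t) :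
    volterraConv p (fun s => ENNReal.ofReal (s ^ q)) t
      ≤ ENNReal.ofReal (betaBound p q * t ^ (p + q + 1)) := by
  have h := lintegral_Ioc_rpow_mul_rpow_le hp hp0 hq hq0 ht
  simp only [sub_zero] at h
  refine le_of_eq_of_le (setLIntegral_congr_fun measurableSet_Ioc fun s hs => ?_) h
  exact (ENNReal.ofReal_mul (Real.rpow_nonneg (by linarith [hs.2]) _)).symm

lemma volterraConv_volterraConv_le (hp : -1 < p) (hp0 : p ≤ 0) (hq : -1 < q) (hq0 : q ≤ 0)
    (hg : Measurable g) :
    volterraConv p (volterraConv q g) t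
      ≤ ENNReal.ofReal (betaBound p q) * volterraConv (p + q + 1) g t := by
  have hB := (betaBound_pos hp hq).le
  calc volterraConv p (volterraConv q g) t
      = ∫⁻ s in Ioc 0 t, ∫⁻ r in Ioc 0 s,
          ENNReal.ofReal ((t - s) ^ p) * (ENNReal.ofReal ((s - r) ^ q) * g r) :=
        lintegral_congr fun s => (lintegral_const_mul' _ _ ENNReal.ofReal_ne_top).symm
    _ = ∫⁻ r in Ioc 0 t, ∫⁻ s in Ioc r t,
          ENNReal.ofReal ((t - s) ^ p) * (ENNReal.ofReal ((s - r) ^ q) * g r) :=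
        lintegral_Ioc_lintegral_Ioc_swap (by fun_prop)
    _ = ∫⁻ r in Ioc 0 t, (∫⁻ s in Ioc r t, ENNReal.ofReal ((t - s) ^ p * (s - r) ^ q)) * g r := by
        refine setLIntegral_congr_fun measurableSet_Ioc fun r _ => ?_
        rw [← lintegral_mul_const _ (by fun_prop)]
        refine setLIntegral_congr_fun measurableSet_Ioc fun s hs => ?_
        rw [ENNReal.ofReal_mul (Real.rpow_nonneg (by linarith [hs.2]) _), mul_assoc]
    _ ≤ ∫⁻ r in Ioc 0 t,
          ENNReal.ofReal (betaBound p q) * (ENNReal.ofReal ((t - r) ^ (p + q + 1)) * g r) := by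
        refine setLIntegral_mono' measurableSet_Ioc fun r hr => ?_
        rw [← mul_assoc, ← ENNReal.ofReal_mul hB]
        exact mul_le_mul_left (lintegral_Ioc_rpow_mul_rpow_le hp hp0 hq hq0 hr.2) _
    _ = ENNReal.ofReal (betaBound p q) * volterraConv (p + q + 1) g t :=
        lintegral_const_mul' _ _ ENNReal.ofReal_ne_top

end volterraConv

lemma lintegral_Ioi_ofReal_rpow_mul_exp_neg_mul {p r : ℝ} (hp : -1 < p) (hr : 0 < r) :
    ∫⁻ u in Ioi 0, ENNReal.ofReal (u ^ p * Real.exp (-(r * u)))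
      = ENNReal.ofReal ((1 / r) ^ (p + 1) * Real.Gamma (p + 1)) := by
  have hint : IntegrableOn (fun u : ℝ => u ^ p * Real.exp (-(r * u))) (Ioi 0) := by
    simpa using integrableOn_rpow_mul_exp_neg_mul_rpow hp one_pos hr
  have hnonneg : 0 ≤ᵐ[volume.restrict (Ioi 0)] fun u : ℝ => u ^ p * Real.exp (-(r * u)) := by
    filter_upwards [ae_restrict_mem measurableSet_Ioi] with u hu
    exact mul_nonneg (Real.rpow_nonneg (le_of_lt hu) _) (Real.exp_nonneg _)
  rw [← ofReal_integral_eq_lintegral_ofReal hint hnonneg,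
    ← Real.integral_rpow_mul_exp_neg_mul_Ioi (by linarith) hr, add_sub_cancel_right]

lemma lintegral_Ioc_exp_mul_rpow_sub_le {p r s T : ℝ} (hp : -1 < p) (hr : 0 < r) :
    ∫⁻ t in Ioc s T, ENNReal.ofReal (Real.exp (-(r * t))) * ENNReal.ofReal ((t - s) ^ p)
      ≤ ENNReal.ofReal (Real.exp (-(r * s)))
        * ENNReal.ofReal ((1 / r) ^ (p + 1) * Real.Gamma (p + 1)) := by
  have hsplit : ∀ t, ENNReal.ofReal (Real.exp (-(r * t))) * ENNReal.ofReal ((t - s) ^ p)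
      = ENNReal.ofReal (Real.exp (-(r * s)))
        * ENNReal.ofReal ((t - s) ^ p * Real.exp (-(r * (t - s)))) := by
    intro t
    rw [← ENNReal.ofReal_mul (Real.exp_nonneg _), ← ENNReal.ofReal_mul (Real.exp_nonneg _),
      show -(r * t) = -(r * s) + -(r * (t - s)) by ring, Real.exp_add]
    ring_nf
  have htranslate : ∫⁻ t in Ioi s, ENNReal.ofReal ((t - s) ^ p * Real.exp (-(r * (t - s))))
      = ∫⁻ u in Ioi 0, ENNReal.ofReal (u ^ p * Real.exp (-(r * u))) := by
    have := (measurePreserving_sub_right volume s).setLIntegral_comp_preimage_emb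
      (measurableEmbedding_subRight s) (fun u => ENNReal.ofReal (u ^ p * Real.exp (-(r * u))))
      (Ioi 0)
    rwa [preimage_sub_const_Ioi, zero_add] at this
  calc ∫⁻ t in Ioc s T, ENNReal.ofReal (Real.exp (-(r * t))) * ENNReal.ofReal ((t - s) ^ p)
      ≤ ∫⁻ t in Ioi s, ENNReal.ofReal (Real.exp (-(r * t))) * ENNReal.ofReal ((t - s) ^ p) :=
        lintegral_mono_set Ioc_subset_Ioi_self
    _ = _ := by
        simp_rw [hsplit]
        rw [lintegral_const_mul' _ _ ENNReal.ofReal_ne_top, htranslate,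
          lintegral_Ioi_ofReal_rpow_mul_exp_neg_mul hp hr]

lemma lintegral_exp_mul_volterraConv_le {p r T : ℝ} {g : ℝ → ℝ≥0∞} (hp : -1 < p) (hr : 0 < r)
    (hg : Measurable g) :
    ∫⁻ t in Ioc 0 T, ENNReal.ofReal (Real.exp (-(r * t))) * volterraConv p g t
      ≤ ENNReal.ofReal ((1 / r) ^ (p + 1) * Real.Gamma (p + 1))
        * ∫⁻ t in Ioc 0 T, ENNReal.ofReal (Real.exp (-(r * t))) * g t := by
  calc ∫⁻ t in Ioc 0 T, ENNReal.ofReal (Real.exp (-(r * t))) * volterraConv p g t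
      = ∫⁻ t in Ioc 0 T, ∫⁻ s in Ioc 0 t,
          ENNReal.ofReal (Real.exp (-(r * t))) * (ENNReal.ofReal ((t - s) ^ p) * g s) :=
        lintegral_congr fun t => (lintegral_const_mul' _ _ ENNReal.ofReal_ne_top).symm
    _ = ∫⁻ s in Ioc 0 T, ∫⁻ t in Ioc s T,
          ENNReal.ofReal (Real.exp (-(r * t))) * (ENNReal.ofReal ((t - s) ^ p) * g s) :=
        lintegral_Ioc_lintegral_Ioc_swap (by fun_prop)
    _ = ∫⁻ s in Ioc 0 T, (∫⁻ t in Ioc s T,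
          ENNReal.ofReal (Real.exp (-(r * t))) * ENNReal.ofReal ((t - s) ^ p)) * g s := by
        simp_rw [← mul_assoc]
        exact lintegral_congr fun s => lintegral_mul_const _ (by fun_prop)
    _ ≤ ∫⁻ s in Ioc 0 T, ENNReal.ofReal ((1 / r) ^ (p + 1) * Real.Gamma (p + 1))
          * (ENNReal.ofReal (Real.exp (-(r * s))) * g s) := by
        refine lintegral_mono fun s => ?_
        rw [← mul_assoc, mul_comm (ENNReal.ofReal _) (ENNReal.ofReal _)]
        exact mul_le_mul_left (lintegral_Ioc_exp_mul_rpow_sub_le hp hr) _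
    _ = _ := lintegral_const_mul' _ _ ENNReal.ofReal_ne_top

structure IsVolterraSubsolution (γ β C T : ℝ) (g : ℝ → ℝ≥0∞) : Prop where
  measurable : Measurable g
  ae_le : ∀ᵐ t ∂volume.restrict (Ioc 0 T),
    g t ≤ ENNReal.ofReal (t ^ (-β)) + ENNReal.ofReal C * volterraConv (-γ) g t

lemma ENNReal.le_two_mul_of_le_add_half {x A : ℝ≥0∞} (hx : x ≠ ∞) (h : x ≤ A + x / 2) :
    x ≤ 2 * A := by
  have hhalf : x / 2 ≤ A := by
    rw [← ENNReal.add_le_add_iff_right (ENNReal.div_ne_top hx two_ne_zero), ENNReal.add_halves]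
    exact h
  rw [← ENNReal.add_halves x, ← two_mul]
  exact mul_le_mul_right hhalf 2

lemma exists_pos_mul_rpow_mul_Gamma_le (C : ℝ) {a : ℝ} (ha : 0 < a) :
    ∃ r > 0, C * ((1 / r) ^ a * Real.Gamma a) ≤ 2⁻¹ := by
  have hlim : Filter.Tendsto (fun r : ℝ => C * ((1 / r) ^ a * Real.Gamma a)) Filter.atTop
      (nhds 0) := by
    have h := ((tendsto_rpow_neg_atTop ha).mul_const (Real.Gamma a)).const_mul C
    rw [zero_mul, mul_zero] at h
    refine h.congr' ((Filter.eventually_gt_atTop 0).mono fun r hr => ?_)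
    dsimp only
    rw [one_div, Real.inv_rpow hr.le, Real.rpow_neg hr.le]
  exact ((Filter.eventually_gt_atTop 0).and
    (hlim.eventually (ge_mem_nhds (by norm_num : (0 : ℝ) < 2⁻¹)))).exists

lemma lintegral_exp_mul_le_of_isVolterraSubsolution {γ β C T r : ℝ} {g : ℝ → ℝ≥0∞}
    (hγ : γ < 1) (hβ : β < 1) (hC : 0 ≤ C) (hT : 0 ≤ T) (hr : 0 < r)
    (hrC : C * ((1 / r) ^ (1 - γ) * Real.Gamma (1 - γ)) ≤ 2⁻¹)
    (hg : IsVolterraSubsolution γ β C T g) :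
    ∫⁻ t in Ioc 0 T, ENNReal.ofReal (Real.exp (-(r * t))) * g t
      ≤ ENNReal.ofReal (T ^ (1 - β) / (1 - β))
        + (∫⁻ t in Ioc 0 T, ENNReal.ofReal (Real.exp (-(r * t))) * g t) / 2 := by
  set w : ℝ → ℝ≥0∞ := fun t => ENNReal.ofReal (Real.exp (-(r * t)))
  set I := ∫⁻ t in Ioc 0 T, w t * g t
  have hA : ∫⁻ t in Ioc 0 T, w t * ENNReal.ofReal (t ^ (-β))
      ≤ ENNReal.ofReal (T ^ (1 - β) / (1 - β)) := by
    have h := lintegral_Ioc_ofReal_rpow_sub_right (a := 0) (q := -β) (by linarith) hT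
    simp only [sub_zero, neg_add_eq_sub] at h
    refine h ▸ setLIntegral_mono' measurableSet_Ioc fun t ht => mul_le_of_le_one_left' ?_
    exact ENNReal.ofReal_le_one.mpr (Real.exp_le_one_iff.mpr (by nlinarith [ht.1]))
  have hV := lintegral_exp_mul_volterraConv_le (T := T) (p := -γ) (by linarith) hr hg.measurable
  rw [neg_add_eq_sub] at hV
  calc I ≤ ∫⁻ t in Ioc 0 T,
        w t * (ENNReal.ofReal (t ^ (-β)) + ENNReal.ofReal C * volterraConv (-γ) g t) :=
        lintegral_mono_ae (hg.ae_le.mono fun t ht => mul_le_mul_right ht _)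
    _ = (∫⁻ t in Ioc 0 T, w t * ENNReal.ofReal (t ^ (-β)))
          + ENNReal.ofReal C * ∫⁻ t in Ioc 0 T, w t * volterraConv (-γ) g t := by
        simp_rw [mul_add, mul_left_comm (w _)]
        rw [lintegral_add_left (by fun_prop), lintegral_const_mul' _ _ ENNReal.ofReal_ne_top]
    _ ≤ ENNReal.ofReal (T ^ (1 - β) / (1 - β))
          + ENNReal.ofReal C * (ENNReal.ofReal ((1 / r) ^ (1 - γ) * Real.Gamma (1 - γ)) * I) :=
        add_le_add hA (mul_le_mul_right hV _)
    _ ≤ ENNReal.ofReal (T ^ (1 - β) / (1 - β)) + I / 2 := by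
        rw [← mul_assoc, ← ENNReal.ofReal_mul hC, ENNReal.div_eq_inv_mul]
        refine add_le_add_right (mul_le_mul_left ?_ _) _
        simpa [ENNReal.ofReal_inv_of_pos] using ENNReal.ofReal_le_ofReal hrC

lemma lintegral_le_of_isVolterraSubsolution {γ β C T r : ℝ} {g : ℝ → ℝ≥0∞} (hγ : γ < 1)
    (hβ : β < 1) (hC : 0 ≤ C) (hT : 0 ≤ T) (hr : 0 < r)
    (hrC : C * ((1 / r) ^ (1 - γ) * Real.Gamma (1 - γ)) ≤ 2⁻¹)
    (hg : IsVolterraSubsolution γ β C T g) (hfin : ∫⁻ s in Ioc 0 T, g s ≠ ∞) :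
    ∫⁻ s in Ioc 0 T, g s ≤ ENNReal.ofReal (2 * Real.exp (r * T) * (T ^ (1 - β) / (1 - β))) := by
  set I := ∫⁻ t in Ioc 0 T, ENNReal.ofReal (Real.exp (-(r * t))) * g t
  have hI : I ≠ ∞ := ne_top_of_le_ne_top hfin <|
    setLIntegral_mono' measurableSet_Ioc fun t ht => mul_le_of_le_one_left' <|
      ENNReal.ofReal_le_one.mpr (Real.exp_le_one_iff.mpr (by nlinarith [ht.1]))
  calc ∫⁻ s in Ioc 0 T, g s
      ≤ ∫⁻ s in Ioc 0 T,
          ENNReal.ofReal (Real.exp (r * T)) * (ENNReal.ofReal (Real.exp (-(r * s))) * g s) := by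
        refine setLIntegral_mono' measurableSet_Ioc fun s hs => ?_
        rw [← mul_assoc, ← ENNReal.ofReal_mul (Real.exp_nonneg _), ← Real.exp_add]
        refine le_mul_of_one_le_left' (ENNReal.one_le_ofReal.mpr (Real.one_le_exp ?_))
        nlinarith [hs.2]
    _ = ENNReal.ofReal (Real.exp (r * T)) * I := lintegral_const_mul' _ _ ENNReal.ofReal_ne_top
    _ ≤ ENNReal.ofReal (Real.exp (r * T)) * (2 * ENNReal.ofReal (T ^ (1 - β) / (1 - β))) :=
        mul_le_mul_right (ENNReal.le_two_mul_of_le_add_half hI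
          (lintegral_exp_mul_le_of_isVolterraSubsolution hγ hβ hC hT hr hrC hg)) _
    _ = ENNReal.ofReal (2 * Real.exp (r * T) * (T ^ (1 - β) / (1 - β))) := by
        rw [← ENNReal.ofReal_ofNat 2, ← ENNReal.ofReal_mul zero_le_two,
          ← ENNReal.ofReal_mul (Real.exp_nonneg _)]
        ring_nf

section Bootstrap

variable {γ β C T : ℝ} {g : ℝ → ℝ≥0∞}

lemma volterraConv_le_of_isVolterraSubsolution_of_le {a K : ℝ} (hγ : γ ∈ Ico (0 : ℝ) 1)
    (hβ : β ∈ Ico (0 : ℝ) 1) (hC : 0 ≤ C) (hK : 0 ≤ K) (ha : -1 < a) (ha0 : a ≤ 0)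
    (hg : IsVolterraSubsolution γ β C T g)
    (hbound : ∀ t ∈ Ioc 0 T, volterraConv (a + 1 - γ) g t ≤ ENNReal.ofReal (K * t ^ (-β))) :
    ∀ t ∈ Ioc 0 T, volterraConv a g t ≤ ENNReal.ofReal
      ((betaBound a (-β) * T ^ (a + 1) + C * betaBound a (-γ) * K) * t ^ (-β)) := by
  intro t ht
  have hγ' : -1 < -γ := by linarith [hγ.2]
  have hβ' : -1 < -β := by linarith [hβ.2]
  have hBβ := betaBound_pos ha hβ'
  have hBγ := betaBound_pos ha hγ'
  have htβ : t ^ (a + -β + 1) ≤ T ^ (a + 1) * t ^ (-β) := by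
    rw [show a + -β + 1 = a + 1 + -β by ring, Real.rpow_add ht.1]
    exact mul_le_mul_of_nonneg_right (Real.rpow_le_rpow ht.1.le ht.2 (by linarith))
      (Real.rpow_nonneg ht.1.le _)
  have hK' := hbound t ht
  rw [show a + 1 - γ = a + -γ + 1 by ring] at hK'
  calc volterraConv a g t
      ≤ volterraConv a
          (fun s => ENNReal.ofReal (s ^ (-β)) + ENNReal.ofReal C * volterraConv (-γ) g s) t :=
        volterraConv_mono_ae hg.ae_le ht.2
    _ = volterraConv a (fun s => ENNReal.ofReal (s ^ (-β))) t
          + ENNReal.ofReal C * volterraConv a (volterraConv (-γ) g) t := by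
        rw [volterraConv_add (by fun_prop), volterraConv_const_mul ENNReal.ofReal_ne_top]
    _ ≤ ENNReal.ofReal (betaBound a (-β) * t ^ (a + -β + 1))
          + ENNReal.ofReal C
            * (ENNReal.ofReal (betaBound a (-γ)) * ENNReal.ofReal (K * t ^ (-β))) := by
        gcongr
        · exact volterraConv_rpow_le ha ha0 hβ' (by linarith [hβ.1]) ht.1.le
        · exact (volterraConv_volterraConv_le ha ha0 hγ' (by linarith [hγ.1]) hg.measurable).trans
            (mul_le_mul_right hK' _)
    _ ≤ _ := by
        have := ht.1
        rw [← ENNReal.ofReal_mul hBγ.le, ← ENNReal.ofReal_mul hC,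
          ← ENNReal.ofReal_add (by positivity) (by positivity)]
        refine ENNReal.ofReal_le_ofReal ?_
        nlinarith [mul_le_mul_of_nonneg_left htβ hBβ.le]

lemma exists_volterraConv_le_of_isVolterraSubsolution_of_lintegral_le {M : ℝ}
    (hγ : γ ∈ Ico (0 : ℝ) 1) (hβ : β ∈ Ico (0 : ℝ) 1) (hC : 0 ≤ C) (hT : 0 < T) (hM : 0 ≤ M)
    (n : ℕ) {a : ℝ} (ha : -1 < a) (han : 0 ≤ a + n * (1 - γ)) :
    ∃ K ≥ 0, ∀ g, IsVolterraSubsolution γ β C T g → ∫⁻ s in Ioc 0 T, g s ≤ ENNReal.ofReal M →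
      ∀ t ∈ Ioc 0 T, volterraConv a g t ≤ ENNReal.ofReal (K * t ^ (-β)) := by
  induction n generalizing a with
  | zero =>
    simp only [CharP.cast_eq_zero, zero_mul, add_zero] at han
    refine ⟨T ^ a * M * T ^ β, by positivity, fun g _ hM' t ht => ?_⟩
    have hTt : 1 ≤ T ^ β * t ^ (-β) := by
      rw [Real.rpow_neg ht.1.le, ← div_eq_mul_inv, one_le_div (Real.rpow_pos_of_pos ht.1 β)]
      exact Real.rpow_le_rpow ht.1.le ht.2 hβ.1
    calc volterraConv a g t ≤ ENNReal.ofReal (T ^ a) * ENNReal.ofReal M :=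
          (volterraConv_le_mul_lintegral han ht.2).trans (mul_le_mul_right hM' _)
      _ ≤ ENNReal.ofReal (T ^ a * M * T ^ β * t ^ (-β)) := by
          rw [← ENNReal.ofReal_mul (by positivity)]
          refine ENNReal.ofReal_le_ofReal ?_
          nlinarith [mul_le_mul_of_nonneg_left hTt (by positivity : 0 ≤ T ^ a * M)]
  | succ n ih =>
    rcases le_or_gt 0 a with ha0 | ha0
    · exact ih ha (by nlinarith [hγ.2])
    obtain ⟨K, hK, hKg⟩ := ih (a := a + 1 - γ) (by linarith [hγ.2]) (by push_cast at han; linarith)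
    have := betaBound_pos ha (by linarith [hγ.2] : -1 < -γ)
    have := betaBound_pos ha (by linarith [hβ.2] : -1 < -β)
    exact ⟨_, by positivity, fun g hg hM' =>
      volterraConv_le_of_isVolterraSubsolution_of_le hγ hβ hC hK ha ha0.le hg (hKg g hg hM')⟩

end Bootstrap

lemma exists_volterraConv_le_of_isVolterraSubsolution {γ β C T : ℝ} (hγ : γ ∈ Ico (0 : ℝ) 1)
    (hβ : β ∈ Ico (0 : ℝ) 1) (hC : 0 ≤ C) (hT : 0 < T) :
    ∃ K ≥ 0, ∀ g, IsVolterraSubsolution γ β C T g → ∫⁻ s in Ioc 0 T, g s ≠ ∞ →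
      ∀ t ∈ Ioc 0 T, volterraConv (-γ) g t ≤ ENNReal.ofReal (K * t ^ (-β)) := by
  have hγ1 : 0 < 1 - γ := sub_pos.mpr hγ.2
  have hβ1 : 0 < 1 - β := sub_pos.mpr hβ.2
  obtain ⟨r, hr, hrC⟩ := exists_pos_mul_rpow_mul_Gamma_le C hγ1
  obtain ⟨n, hn⟩ := exists_nat_ge (γ / (1 - γ))
  rw [div_le_iff₀ hγ1] at hn
  obtain ⟨K, hK, hKg⟩ := exists_volterraConv_le_of_isVolterraSubsolution_of_lintegral_le hγ hβ hC
    hT (M := 2 * Real.exp (r * T) * (T ^ (1 - β) / (1 - β))) (by positivity) n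
    (a := -γ) (by linarith [hγ.2]) (by linarith)
  exact ⟨K, hK, fun g hg hfin =>
    hKg g hg (lintegral_le_of_isVolterraSubsolution hγ.2 hβ.2 hC hT.le hr hrC hg hfin)⟩

lemma ofReal_integral_le_lintegral_ofReal {α : Type*} [MeasurableSpace α] {μ : Measure α}
    (f : α → ℝ) : ENNReal.ofReal (∫ x, f x ∂μ) ≤ ∫⁻ x, ENNReal.ofReal (f x) ∂μ := by
  by_cases hf : Integrable f μ
  · rw [integral_eq_lintegral_pos_part_sub_lintegral_neg_part hf]
    exact (ENNReal.ofReal_le_ofReal (sub_le_self _ ENNReal.toReal_nonneg)).trans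
      ENNReal.ofReal_toReal_le
  · simp [integral_undef hf]

lemma ofReal_intervalIntegral_le_volterraConv {a t : ℝ} (ht : 0 ≤ t) (f : ℝ → ℝ) :
    ENNReal.ofReal (∫ s in (0 : ℝ)..t, (t - s) ^ a * f s)
      ≤ volterraConv a (fun s => ENNReal.ofReal (f s)) t := by
  rw [intervalIntegral.integral_of_le ht]
  refine (ofReal_integral_le_lintegral_ofReal _).trans_eq ?_
  refine setLIntegral_congr_fun measurableSet_Ioc fun s hs => ?_
  exact ENNReal.ofReal_mul (Real.rpow_nonneg (by linarith [hs.2]) _)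

lemma exists_isVolterraSubsolution_of_le {γ β C T : ℝ} {f : ℝ → ℝ} (hC : 0 ≤ C)
    (hf : IntegrableOn f (Ioc 0 T))
    (hle : ∀ t ∈ Ioc 0 T, f t ≤ t ^ (-β) + C * ∫ s in (0 : ℝ)..t, (t - s) ^ (-γ) * f s) :
    ∃ g, IsVolterraSubsolution γ β C T g ∧ ∫⁻ s in Ioc 0 T, g s ≠ ∞ ∧
      ∀ t ∈ Ioc 0 T,
        ENNReal.ofReal (∫ s in (0 : ℝ)..t, (t - s) ^ (-γ) * f s) ≤ volterraConv (-γ) g t := by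
  obtain ⟨g, hgm, hfg⟩ : ∃ g, Measurable g ∧
      (fun s => ENNReal.ofReal (f s)) =ᵐ[volume.restrict (Ioc 0 T)] g :=
    ⟨_, hf.aemeasurable.ennreal_ofReal.measurable_mk, hf.aemeasurable.ennreal_ofReal.ae_eq_mk⟩
  have hV : ∀ t ∈ Ioc 0 T,
      ENNReal.ofReal (∫ s in (0 : ℝ)..t, (t - s) ^ (-γ) * f s) ≤ volterraConv (-γ) g t :=
    fun t ht => (ofReal_intervalIntegral_le_volterraConv ht.1.le f).trans
      (volterraConv_mono_ae hfg.le ht.2)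
  refine ⟨g, ⟨hgm, ?_⟩, ?_, hV⟩
  · filter_upwards [hfg, ae_restrict_mem measurableSet_Ioc] with t hgt ht
    rw [← hgt]
    calc ENNReal.ofReal (f t)
        ≤ ENNReal.ofReal (t ^ (-β))
            + ENNReal.ofReal (C * ∫ s in (0 : ℝ)..t, (t - s) ^ (-γ) * f s) :=
          (ENNReal.ofReal_le_ofReal (hle t ht)).trans ENNReal.ofReal_add_le
      _ ≤ ENNReal.ofReal (t ^ (-β)) + ENNReal.ofReal C * volterraConv (-γ) g t := by
          rw [ENNReal.ofReal_mul hC]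
          gcongr
          exact hV t ht
  · rw [← lintegral_congr_ae hfg]
    refine ne_top_of_le_ne_top hf.hasFiniteIntegral.ne (lintegral_mono fun s => ?_)
    rw [Real.enorm_eq_ofReal_abs]
    exact ENNReal.ofReal_le_ofReal (le_abs_self _)

/-- Gronwall inequality of Volterra type. -/
theorem stmt5 (γ β T C₂ : ℝ) (hγ : γ ∈ Set.Ico (0 : ℝ) 1) (hβ : β ∈ Set.Ico (0 : ℝ) 1)
    (hT : 0 < T) (hC₂ : 0 < C₂) :
    ∃ C₃ > 0, ∀ (C₁ : ℝ) (f : ℝ → ℝ), 0 < C₁ →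
      IntegrableOn f (Set.Ioc 0 T) →
      (∀ t ∈ Set.Ioc (0 : ℝ) T, 0 ≤ f t) →
      (∀ t ∈ Set.Ioc (0 : ℝ) T,
        f t ≤ C₁ * t ^ (-β) + C₂ * ∫ s in (0 : ℝ)..t, (t - s) ^ (-γ) * f s) →
      ∀ t ∈ Set.Ioc (0 : ℝ) T, f t ≤ C₃ * C₁ * t ^ (-β) := by
  obtain ⟨K, hK, hKg⟩ := exists_volterraConv_le_of_isVolterraSubsolution hγ hβ hC₂.le hT
  refine ⟨1 + C₂ * K, by positivity, fun C₁ f hC₁ hf _ hle t ht => ?_⟩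
  have hscale : ∀ u, ∫ s in (0 : ℝ)..u, (u - s) ^ (-γ) * (f s / C₁)
      = (∫ s in (0 : ℝ)..u, (u - s) ^ (-γ) * f s) / C₁ := fun u => by
    simp_rw [← mul_div_assoc]
    exact intervalIntegral.integral_div _ _
  obtain ⟨g, hg, hfin, hfg⟩ := exists_isVolterraSubsolution_of_le (γ := γ) (β := β) hC₂.le
    (hf.div_const C₁) fun u hu => by
      rw [hscale, div_le_iff₀ hC₁]
      exact (hle u hu).trans_eq (by field_simp)
  have hI : (∫ s in (0 : ℝ)..t, (t - s) ^ (-γ) * f s) / C₁ ≤ K * t ^ (-β) := by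
    rw [← hscale]
    exact (ENNReal.ofReal_le_ofReal_iff (mul_nonneg hK (Real.rpow_nonneg ht.1.le _))).mp
      ((hfg t ht).trans (hKg g hg hfin t ht))
  rw [div_le_iff₀ hC₁] at hI
  calc f t ≤ C₁ * t ^ (-β) + C₂ * ∫ s in (0 : ℝ)..t, (t - s) ^ (-γ) * f s := hle t ht
    _ ≤ C₁ * t ^ (-β) + C₂ * (K * t ^ (-β) * C₁) := by gcongr
    _ = (1 + C₂ * K) * C₁ * t ^ (-β) := by ring
end

section
/- Let Z be an α-stable process on ℝ^d with Lévy measure ν(A) = ∫₀^∞ r^{-1-α} ∫_{S^{d-1}} 1_A(rω) π(dω) dr, π finite on S^{d-1}. Suppose φ: ℝ₊ × ℝ^d → ℝ^d is measurable, |φ(t,z)| ≤ c₁|z|, and the nondegeneracy condition inf_{ω₀ ∈ S^{d-1}} inf_{t, λ > 0} ∫_{S^{d-1}} |ω₀ · φ(t, λω)|² / λ² π(dω) = c₀ > 0 holds, with the symmetry condition ∫_{R₁<|z|<R₂} φ(t,z) ν(dz) = 0 when α = 1. Define ψ₁(ξ) := ∫₀¹ ∫_{|z|<1} (e^{i ξ·φ(t,z)}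 − 1) ν(dz) dt for α ∈ (0,1). Then there is a constant c₂ > 0 (depending on c₀, c₁, d, α, π) such that Re ψ₁(ξ) ≤ −c₂ (|ξ|² ∧ |ξ|^α) for all ξ ∈ ℝ^d. -/
open MeasureTheory Set

lemma aux_one_sub_cos (y : ℝ) : 1 - Real.cos y = 2 * Real.sin (y/2) ^ 2 := by
  have h := Real.abs_sin_half y
  have h2 : Real.sin (y/2) ^ 2 = (1 - Real.cos y) / 2 := by
    rw [← sq_abs, h, Real.sq_sqrt]
    nlinarith [Real.cos_le_one y]
  linarith

lemma aux_cos_bound {y : ℝ} (hy : |y| ≤ 1) : Real.cos y - 1 ≤ -(y ^ 2) / 8 := by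
  have hpi : (2:ℝ) ≤ Real.pi := Real.two_le_pi
  have hpi4 : Real.pi ≤ 4 := Real.pi_le_four
  have h1 : |y / 2| ≤ Real.pi / 2 := by
    rw [abs_div]
    simp only [abs_two]
    calc |y| / 2 ≤ 1 / 2 := by linarith
    _ ≤ Real.pi / 2 := by linarith
  have h2 := Real.mul_abs_le_abs_sin h1
  have h3 : |y| / 4 ≤ |Real.sin (y/2)| := by
    calc |y| / 4 = (2 / 4) * (|y| / 2) := by ring
    _ ≤ (2 / Real.pi) * |y / 2| := by
        rw [abs_div, abs_two]
        apply mul_le_mul _ le_rfl (by positivity) (by positivity)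
        apply div_le_div_of_nonneg_left (by norm_num) (by linarith) hpi4
    _ ≤ |Real.sin (y/2)| := h2
  have h4 : y ^ 2 / 16 ≤ Real.sin (y/2) ^ 2 := by
    rw [← sq_abs (Real.sin (y/2))]
    calc y ^ 2 / 16 = (|y| / 4) ^ 2 := by rw [← sq_abs y]; ring
    _ ≤ |Real.sin (y/2)| ^ 2 := by
        apply sq_le_sq' <;> nlinarith [abs_nonneg y, abs_nonneg (Real.sin (y/2))]
  have h5 := aux_one_sub_cos y
  linarith

lemma aux_exp_norm_le (x : ℝ) : ‖Complex.exp (Complex.I * x) - 1‖ ≤ |x| := by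
  have h1 : Complex.exp (Complex.I * x) - 1
      = Complex.ofReal (Real.cos x - 1) + Complex.ofReal (Real.sin x) * Complex.I := by
    rw [mul_comm, Complex.exp_mul_I]
    push_cast
    ring
  rw [h1, Complex.norm_add_mul_I]
  have h2 : (Real.cos x - 1) ^ 2 + Real.sin x ^ 2 = 2 * (1 - Real.cos x) := by
    nlinarith [Real.sin_sq_add_cos_sq x]
  rw [h2, aux_one_sub_cos x]
  have h3 : 2 * (2 * Real.sin (x/2) ^ 2) = (2 * |Real.sin (x/2)|) ^ 2 := by
    rw [← sq_abs (Real.sin (x/2))]; ring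
  rw [h3, Real.sqrt_sq (by positivity)]
  have h4 : |Real.sin (x/2)| ≤ |x/2| := Real.abs_sin_le_abs
  rw [abs_div, abs_two] at h4
  linarith [abs_nonneg x]

lemma aux_exp_norm_le_two (x : ℝ) : ‖Complex.exp (Complex.I * x) - 1‖ ≤ 2 := by
  have h1 : ‖Complex.exp (Complex.I * x)‖ = 1 := by
    rw [Complex.norm_exp]
    simp [Complex.mul_re]
  calc ‖Complex.exp (Complex.I * x) - 1‖ ≤ ‖Complex.exp (Complex.I * x)‖ + ‖(1:ℂ)‖ :=
        norm_sub_le _ _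
  _ ≤ 2 := by rw [h1]; norm_num

lemma aux_exp_re (x : ℝ) : (Complex.exp (Complex.I * x) - 1).re = Real.cos x - 1 := by
  rw [mul_comm]
  simp [Complex.exp_ofReal_mul_I_re]

noncomputable section

variable {d : ℕ}

local notation "E" => EuclideanSpace ℝ (Fin d)
local notation "S" => Metric.sphere (0 : EuclideanSpace ℝ (Fin d)) 1

private lemma m1 (ξ : E) (φ : ℝ → E → E) (hmeas : Measurable (Function.uncurry φ))
    (t r : ℝ) :
    Measurable fun ω : S => (inner ℝ ξ (φ t (r • (ω : E))) : ℝ) :=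
  ((continuous_const.inner continuous_id).measurable).comp
    (hmeas.comp (measurable_const.prodMk (measurable_subtype_coe.const_smul r)))

private lemma m2 (ξ : E) (φ : ℝ → E → E) (hmeas : Measurable (Function.uncurry φ))
    (t r : ℝ) :
    Measurable fun ω : S =>
      Complex.exp (Complex.I * ((inner ℝ ξ (φ t (r • (ω : E))) : ℝ) : ℂ)) - 1 :=
  ((measurable_const.mul (Complex.measurable_ofReal.comp (m1 ξ φ hmeas t r))).cexp).sub
    measurable_const

private lemma m3 (ξ : E) (φ : ℝ → E → E) (hmeas : Measurable (Function.uncurry φ)) :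
    Measurable fun p : (ℝ × ℝ) × S =>
      Complex.exp (Complex.I *
        ((inner ℝ ξ (φ p.1.1 (p.1.2 • (p.2 : E))) : ℝ) : ℂ)) - 1 := by
  have h1 : Measurable fun p : (ℝ × ℝ) × S => (p.1.1, p.1.2 • (p.2 : E)) :=
    (measurable_fst.fst).prodMk
      ((measurable_fst.snd).smul (measurable_subtype_coe.comp measurable_snd))
  have h2 : Measurable fun p : (ℝ × ℝ) × S => (inner ℝ ξ (φ p.1.1 (p.1.2 • (p.2 : E))) : ℝ) :=
    ((continuous_const.inner continuous_id).measurable).comp (hmeas.comp h1)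
  exact ((measurable_const.mul (Complex.measurable_ofReal.comp h2)).cexp).sub measurable_const


variable (πm : Measure (Metric.sphere (0 : EuclideanSpace ℝ (Fin d)) 1)) [IsFiniteMeasure πm]

private lemma int_omega (ξ : E) (φ : ℝ → E → E) (hmeas : Measurable (Function.uncurry φ))
    (t r : ℝ) :
    Integrable (fun ω : S =>
      Complex.exp (Complex.I * ((inner ℝ ξ (φ t (r • (ω : E))) : ℝ) : ℂ)) - 1) πm :=
  (integrable_const (2:ℝ)).mono' (m2 ξ φ hmeas t r).aestronglyMeasurable
    (Filter.Eventually.of_forall fun _ => aux_exp_norm_le_two _)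

private lemma re_eq (ξ : E) (φ : ℝ → E → E) (hmeas : Measurable (Function.uncurry φ))
    (t r : ℝ) :
    (∫ ω : S, (Complex.exp (Complex.I * ((inner ℝ ξ (φ t (r • (ω : E))) : ℝ) : ℂ)) - 1) ∂πm).re
      = ∫ ω : S, (Real.cos ((inner ℝ ξ (φ t (r • (ω : E))) : ℝ)) - 1) ∂πm := by
  rw [← RCLike.re_eq_complex_re, ← integral_re (int_omega πm ξ φ hmeas t r)]
  refine integral_congr_ae (Filter.Eventually.of_forall fun ω => ?_)
  rw [RCLike.re_eq_complex_re]
  exact aux_exp_re _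

private lemma int_cos (ξ : E) (φ : ℝ → E → E) (hmeas : Measurable (Function.uncurry φ))
    (t r : ℝ) :
    Integrable (fun ω : S => Real.cos ((inner ℝ ξ (φ t (r • (ω : E))) : ℝ)) - 1) πm := by
  refine ((int_omega πm ξ φ hmeas t r).re).congr
    (Filter.Eventually.of_forall fun ω => ?_)
  rw [RCLike.re_eq_complex_re]
  exact aux_exp_re _

private lemma x_le (ξ : E) (φ : ℝ → E → E)
    {c₁ : ℝ} (hgrow : ∀ t z, ‖φ t z‖ ≤ c₁ * ‖z‖) (t : ℝ) {r : ℝ} (hr : 0 ≤ r) (ω : S) :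
    |(inner ℝ ξ (φ t (r • (ω : E))) : ℝ)| ≤ c₁ * ‖ξ‖ * r := by
  have hω : ‖(ω : E)‖ = 1 := by
    have := ω.2
    rwa [mem_sphere_zero_iff_norm] at this
  calc |(inner ℝ ξ (φ t (r • (ω : E))) : ℝ)|
      ≤ ‖ξ‖ * ‖φ t (r • (ω : E))‖ := abs_real_inner_le_norm _ _
    _ ≤ ‖ξ‖ * (c₁ * ‖r • (ω : E)‖) :=
        mul_le_mul_of_nonneg_left (hgrow _ _) (norm_nonneg _)
    _ = c₁ * ‖ξ‖ * r := by
        rw [norm_smul, hω, Real.norm_eq_abs, abs_of_nonneg hr]; ring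

private lemma int_sq (ξ : E) (φ : ℝ → E → E) (hmeas : Measurable (Function.uncurry φ))
    {c₁ : ℝ} (hgrow : ∀ t z, ‖φ t z‖ ≤ c₁ * ‖z‖) (t : ℝ) {r : ℝ} (hr : 0 ≤ r) :
    Integrable (fun ω : S => ((inner ℝ ξ (φ t (r • (ω : E))) : ℝ)) ^ 2) πm := by
  refine (integrable_const ((c₁ * ‖ξ‖ * r) ^ 2)).mono'
    ((m1 ξ φ hmeas t r).pow measurable_const).aestronglyMeasurable
    (Filter.Eventually.of_forall fun ω => ?_)
  rw [Real.norm_eq_abs, abs_pow]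
  exact pow_le_pow_left₀ (abs_nonneg _) (x_le ξ φ hgrow t hr ω) 2

private lemma norm_F_le (ξ : E) (φ : ℝ → E → E)
    {c₁ : ℝ} (hgrow : ∀ t z, ‖φ t z‖ ≤ c₁ * ‖z‖) (t : ℝ) {r : ℝ} (hr : 0 ≤ r) :
    ‖∫ ω : S, (Complex.exp (Complex.I * ((inner ℝ ξ (φ t (r • (ω : E))) : ℝ) : ℂ)) - 1) ∂πm‖
      ≤ c₁ * ‖ξ‖ * r * (πm Set.univ).toReal := by
  refine norm_integral_le_of_norm_le_const (Filter.Eventually.of_forall fun ω => ?_)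
  calc ‖Complex.exp (Complex.I * ((inner ℝ ξ (φ t (r • (ω : E))) : ℝ) : ℂ)) - 1‖
      ≤ |(inner ℝ ξ (φ t (r • (ω : E))) : ℝ)| := aux_exp_norm_le _
    _ ≤ c₁ * ‖ξ‖ * r := x_le ξ φ hgrow t hr ω

private lemma Fsm (ξ : E) (φ : ℝ → E → E) (hmeas : Measurable (Function.uncurry φ)) :
    StronglyMeasurable fun p : ℝ × ℝ =>
      ∫ ω : S, (Complex.exp (Complex.I *
        ((inner ℝ ξ (φ p.1 (p.2 • (ω : E))) : ℝ) : ℂ)) - 1) ∂πm :=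
  (m3 ξ φ hmeas).stronglyMeasurable.integral_prod_right'

private lemma usm (α : ℝ) (ξ : E) (φ : ℝ → E → E) (hmeas : Measurable (Function.uncurry φ)) :
    StronglyMeasurable fun p : ℝ × ℝ =>
      (p.2 ^ (-1 - α)) • ∫ ω : S, (Complex.exp (Complex.I *
        ((inner ℝ ξ (φ p.1 (p.2 • (ω : E))) : ℝ) : ℂ)) - 1) ∂πm :=
  ((measurable_snd.pow measurable_const).stronglyMeasurable).smul (Fsm πm ξ φ hmeas)

private lemma int_r {α : ℝ} (hα0 : 0 < α) (hα1 : α < 1) (ξ : E) (φ : ℝ → E → E)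
    (hmeas : Measurable (Function.uncurry φ))
    {c₁ : ℝ} (hgrow : ∀ t z, ‖φ t z‖ ≤ c₁ * ‖z‖) (hc₁ : 0 ≤ c₁) (t : ℝ) :
    IntegrableOn (fun r : ℝ => (r ^ (-1 - α)) • ∫ ω : S, (Complex.exp (Complex.I *
        ((inner ℝ ξ (φ t (r • (ω : E))) : ℝ) : ℂ)) - 1) ∂πm) (Set.Ioo (0:ℝ) 1) := by
  have hmaj : IntegrableOn (fun r : ℝ => (c₁ * ‖ξ‖ * (πm Set.univ).toReal) * r ^ (-α))
      (Set.Ioo (0:ℝ) 1) :=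
    (((intervalIntegral.integrableOn_Ioo_rpow_iff zero_lt_one).2 (by linarith)).const_mul _)
  refine hmaj.mono' ?_ ?_
  · exact (((usm πm α ξ φ hmeas).comp_measurable
      (measurable_const.prodMk measurable_id)).aestronglyMeasurable).restrict
  · rw [ae_restrict_iff' measurableSet_Ioo]
    refine Filter.Eventually.of_forall fun r hr => ?_
    have hrpos : (0:ℝ) < r := hr.1
    have h1 : r ^ (-1 - α) * r = r ^ (-α) := by
      nth_rewrite 2 [← Real.rpow_one r]
      rw [← Real.rpow_add hrpos]
      rw [show (-1 - α + 1 : ℝ) = -α by ring]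
    rw [norm_smul, Real.norm_eq_abs, abs_of_nonneg (Real.rpow_nonneg hrpos.le _)]
    calc r ^ (-1 - α) *
        ‖∫ ω : S, (Complex.exp (Complex.I *
          ((inner ℝ ξ (φ t (r • (ω : E))) : ℝ) : ℂ)) - 1) ∂πm‖
        ≤ r ^ (-1 - α) * (c₁ * ‖ξ‖ * r * (πm Set.univ).toReal) :=
          mul_le_mul_of_nonneg_left (norm_F_le πm ξ φ hgrow t hrpos.le)
            (Real.rpow_nonneg hrpos.le _)
      _ = (c₁ * ‖ξ‖ * (πm Set.univ).toReal) * (r ^ (-1 - α) * r) := by ring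
      _ = (c₁ * ‖ξ‖ * (πm Set.univ).toReal) * r ^ (-α) := by rw [h1]

private lemma norm_G_le {α : ℝ} (hα0 : 0 < α) (hα1 : α < 1) (ξ : E) (φ : ℝ → E → E)
    {c₁ : ℝ} (hgrow : ∀ t z, ‖φ t z‖ ≤ c₁ * ‖z‖) (t : ℝ) :
    ‖∫ r in Set.Ioo (0:ℝ) 1, (r ^ (-1 - α)) • ∫ ω : S, (Complex.exp (Complex.I *
        ((inner ℝ ξ (φ t (r • (ω : E))) : ℝ) : ℂ)) - 1) ∂πm‖
      ≤ ∫ r in Set.Ioo (0:ℝ) 1, (c₁ * ‖ξ‖ * (πm Set.univ).toReal) * r ^ (-α) := by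
  have hmaj : IntegrableOn (fun r : ℝ => (c₁ * ‖ξ‖ * (πm Set.univ).toReal) * r ^ (-α))
      (Set.Ioo (0:ℝ) 1) :=
    (((intervalIntegral.integrableOn_Ioo_rpow_iff zero_lt_one).2 (by linarith)).const_mul _)
  refine norm_integral_le_of_norm_le hmaj ?_
  rw [ae_restrict_iff' measurableSet_Ioo]
  refine Filter.Eventually.of_forall fun r hr => ?_
  have hrpos : (0:ℝ) < r := hr.1
  have h1 : r ^ (-1 - α) * r = r ^ (-α) := by
    nth_rewrite 2 [← Real.rpow_one r]
    rw [← Real.rpow_add hrpos]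
    rw [show (-1 - α + 1 : ℝ) = -α by ring]
  rw [norm_smul, Real.norm_eq_abs, abs_of_nonneg (Real.rpow_nonneg hrpos.le _)]
  calc r ^ (-1 - α) *
      ‖∫ ω : S, (Complex.exp (Complex.I *
        ((inner ℝ ξ (φ t (r • (ω : E))) : ℝ) : ℂ)) - 1) ∂πm‖
      ≤ r ^ (-1 - α) * (c₁ * ‖ξ‖ * r * (πm Set.univ).toReal) :=
        mul_le_mul_of_nonneg_left (norm_F_le πm ξ φ hgrow t hrpos.le)
          (Real.rpow_nonneg hrpos.le _)
    _ = (c₁ * ‖ξ‖ * (πm Set.univ).toReal) * (r ^ (-1 - α) * r) := by ring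
    _ = (c₁ * ‖ξ‖ * (πm Set.univ).toReal) * r ^ (-α) := by rw [h1]

private lemma int_t {α : ℝ} (hα0 : 0 < α) (hα1 : α < 1) (ξ : E) (φ : ℝ → E → E)
    (hmeas : Measurable (Function.uncurry φ))
    {c₁ : ℝ} (hgrow : ∀ t z, ‖φ t z‖ ≤ c₁ * ‖z‖) :
    IntegrableOn (fun t : ℝ => ∫ r in Set.Ioo (0:ℝ) 1,
      (r ^ (-1 - α)) • ∫ ω : S, (Complex.exp (Complex.I *
        ((inner ℝ ξ (φ t (r • (ω : E))) : ℝ) : ℂ)) - 1) ∂πm) (Set.Ioc (0:ℝ) 1) := by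
  refine (integrable_const (∫ r in Set.Ioo (0:ℝ) 1,
      (c₁ * ‖ξ‖ * (πm Set.univ).toReal) * r ^ (-α))).mono' ?_ ?_
  · exact ((usm πm α ξ φ hmeas).integral_prod_right').aestronglyMeasurable.restrict
  · exact Filter.Eventually.of_forall fun t => norm_G_le πm hα0 hα1 ξ φ hgrow t

private lemma G_re {α : ℝ} (hα0 : 0 < α) (hα1 : α < 1) (ξ : E) (φ : ℝ → E → E)
    (hmeas : Measurable (Function.uncurry φ))
    {c₁ : ℝ} (hgrow : ∀ t z, ‖φ t z‖ ≤ c₁ * ‖z‖) (hc₁ : 0 ≤ c₁) (t : ℝ) :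
    (∫ r in Set.Ioo (0:ℝ) 1, (r ^ (-1 - α)) • ∫ ω : S, (Complex.exp (Complex.I *
        ((inner ℝ ξ (φ t (r • (ω : E))) : ℝ) : ℂ)) - 1) ∂πm).re
      = ∫ r in Set.Ioo (0:ℝ) 1, r ^ (-1 - α) *
          ∫ ω : S, (Real.cos ((inner ℝ ξ (φ t (r • (ω : E))) : ℝ)) - 1) ∂πm := by
  rw [← RCLike.re_eq_complex_re, ← integral_re (int_r πm hα0 hα1 ξ φ hmeas hgrow hc₁ t)]
  refine integral_congr_ae (Filter.Eventually.of_forall fun r => ?_)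
  rw [RCLike.re_eq_complex_re]
  simp only [Complex.smul_re, smul_eq_mul]
  rw [re_eq πm ξ φ hmeas t r]

private lemma int_r_re {α : ℝ} (hα0 : 0 < α) (hα1 : α < 1) (ξ : E) (φ : ℝ → E → E)
    (hmeas : Measurable (Function.uncurry φ))
    {c₁ : ℝ} (hgrow : ∀ t z, ‖φ t z‖ ≤ c₁ * ‖z‖) (hc₁ : 0 ≤ c₁) (t : ℝ) :
    IntegrableOn (fun r : ℝ => r ^ (-1 - α) *
      ∫ ω : S, (Real.cos ((inner ℝ ξ (φ t (r • (ω : E))) : ℝ)) - 1) ∂πm) (Set.Ioo (0:ℝ) 1) := by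
  refine ((int_r πm hα0 hα1 ξ φ hmeas hgrow hc₁ t).re).congr
    (Filter.Eventually.of_forall fun r => ?_)
  rw [RCLike.re_eq_complex_re]
  simp only [Complex.smul_re, smul_eq_mul]
  rw [re_eq πm ξ φ hmeas t r]

private lemma int_t_re {α : ℝ} (hα0 : 0 < α) (hα1 : α < 1) (ξ : E) (φ : ℝ → E → E)
    (hmeas : Measurable (Function.uncurry φ))
    {c₁ : ℝ} (hgrow : ∀ t z, ‖φ t z‖ ≤ c₁ * ‖z‖) (hc₁ : 0 ≤ c₁) :
    IntegrableOn (fun t : ℝ => ∫ r in Set.Ioo (0:ℝ) 1, r ^ (-1 - α) *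
      ∫ ω : S, (Real.cos ((inner ℝ ξ (φ t (r • (ω : E))) : ℝ)) - 1) ∂πm) (Set.Ioc (0:ℝ) 1) := by
  refine ((int_t πm hα0 hα1 ξ φ hmeas hgrow).re).congr
    (Filter.Eventually.of_forall fun t => ?_)
  rw [RCLike.re_eq_complex_re]
  exact G_re πm hα0 hα1 ξ φ hmeas hgrow hc₁ t

private lemma key {α c₀ c₁ : ℝ} (hα0 : 0 < α) (hα1 : α < 1) (hc₀ : 0 < c₀) (hc₁ : 0 < c₁)
    (φ : ℝ → E → E) (hmeas : Measurable (Function.uncurry φ))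
    (hgrow : ∀ t z, ‖φ t z‖ ≤ c₁ * ‖z‖)
    (hnondeg : ∀ (ω₀ : Metric.sphere (0 : EuclideanSpace ℝ (Fin d)) 1) (t l : ℝ),
      0 < t → 0 < l →
      c₀ ≤ ∫ ω, ((inner ℝ ((ω₀ : E)) (φ t (l • (ω : E))) : ℝ)) ^ 2 / l ^ 2 ∂πm)
    (ξ : E) (hξ : ξ ≠ 0) {t : ℝ} (ht : t ∈ Set.Ioc (0:ℝ) 1) :
    ∫ r in Set.Ioo (0:ℝ) 1, r ^ (-1 - α) *
        ∫ ω : S, (Real.cos ((inner ℝ ξ (φ t (r • (ω : E))) : ℝ)) - 1) ∂πm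
      ≤ -(c₀ * ‖ξ‖ ^ 2 / 8 *
          ((min (1/2 : ℝ) (c₁ * ‖ξ‖)⁻¹) ^ ((2:ℝ) - α) / (2 - α))) := by
  have hxi : 0 < ‖ξ‖ := by rw [norm_pos_iff]; exact hξ
  have h2α : (0:ℝ) < 2 - α := by linarith
  set δ := min (1/2 : ℝ) (c₁ * ‖ξ‖)⁻¹ with hδdef
  have hδ0 : 0 < δ := lt_min (by norm_num) (inv_pos.2 (by positivity))
  have hδhalf : δ ≤ 1/2 := min_le_left _ _
  have hδ1 : δ ≤ 1 := by linarith
  have hδc : c₁ * ‖ξ‖ * δ ≤ 1 := by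
    have h := min_le_right (1/2 : ℝ) (c₁ * ‖ξ‖)⁻¹
    calc c₁ * ‖ξ‖ * δ ≤ c₁ * ‖ξ‖ * (c₁ * ‖ξ‖)⁻¹ :=
          mul_le_mul_of_nonneg_left h (by positivity)
      _ = 1 := mul_inv_cancel₀ (by positivity)
  have hg_nonpos : ∀ r : ℝ,
      (∫ ω : S, (Real.cos ((inner ℝ ξ (φ t (r • (ω : E))) : ℝ)) - 1) ∂πm) ≤ 0 :=
    fun r => integral_nonpos fun ω => sub_nonpos.2 (Real.cos_le_one _)
  have hint1 := int_r_re πm hα0 hα1 ξ φ hmeas hgrow hc₁.le t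
  -- Step 1 : shrink the domain of integration
  have step1 : (∫ r in Set.Ioo (0:ℝ) 1, r ^ (-1 - α) *
        ∫ ω : S, (Real.cos ((inner ℝ ξ (φ t (r • (ω : E))) : ℝ)) - 1) ∂πm)
      ≤ ∫ r in Set.Ioo (0:ℝ) δ, r ^ (-1 - α) *
        ∫ ω : S, (Real.cos ((inner ℝ ξ (φ t (r • (ω : E))) : ℝ)) - 1) ∂πm := by
    have h1 : (∫ r in Set.Ioo (0:ℝ) δ, -(r ^ (-1 - α) *
          ∫ ω : S, (Real.cos ((inner ℝ ξ (φ t (r • (ω : E))) : ℝ)) - 1) ∂πm))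
        ≤ ∫ r in Set.Ioo (0:ℝ) 1, -(r ^ (-1 - α) *
          ∫ ω : S, (Real.cos ((inner ℝ ξ (φ t (r • (ω : E))) : ℝ)) - 1) ∂πm) := by
      refine setIntegral_mono_set hint1.neg ?_ ?_
      · filter_upwards [ae_restrict_mem measurableSet_Ioo] with r hr
        simp only [Pi.zero_apply, neg_nonneg]
        exact mul_nonpos_of_nonneg_of_nonpos (Real.rpow_nonneg hr.1.le _) (hg_nonpos r)
      · exact (Ioo_subset_Ioo_right hδ1).eventuallyLE
    rw [integral_neg, integral_neg] at h1
    linarith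
  -- Step 2 : pointwise bound on (0, δ)
  have step2 : (∫ r in Set.Ioo (0:ℝ) δ, r ^ (-1 - α) *
        ∫ ω : S, (Real.cos ((inner ℝ ξ (φ t (r • (ω : E))) : ℝ)) - 1) ∂πm)
      ≤ ∫ r in Set.Ioo (0:ℝ) δ, (-(c₀ * ‖ξ‖ ^ 2 / 8)) * r ^ ((1:ℝ) - α) := by
    refine setIntegral_mono_on (hint1.mono_set (Ioo_subset_Ioo_right hδ1))
      (((intervalIntegral.integrableOn_Ioo_rpow_iff hδ0).2
        (by linarith : (-1:ℝ) < 1 - α)).const_mul _) measurableSet_Ioo ?_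
    intro r hr
    have hr0 : (0:ℝ) < r := hr.1
    have hrδ : r < δ := hr.2
    have hcc : c₁ * ‖ξ‖ * r ≤ 1 := by
      have := mul_le_mul_of_nonneg_left hrδ.le (show (0:ℝ) ≤ c₁ * ‖ξ‖ by positivity)
      linarith
    have hcos : ∀ ω : S, Real.cos ((inner ℝ ξ (φ t (r • (ω : E))) : ℝ)) - 1
        ≤ -(((inner ℝ ξ (φ t (r • (ω : E))) : ℝ)) ^ 2) / 8 := fun ω =>
      aux_cos_bound (le_trans (x_le ξ φ hgrow t hr0.le ω) hcc)
    have h2 : (∫ ω : S, (Real.cos ((inner ℝ ξ (φ t (r • (ω : E))) : ℝ)) - 1) ∂πm)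
        ≤ ∫ ω : S, -(((inner ℝ ξ (φ t (r • (ω : E))) : ℝ)) ^ 2) / 8 ∂πm :=
      integral_mono (int_cos πm ξ φ hmeas t r)
        (((int_sq πm ξ φ hmeas hgrow t hr0.le).neg).div_const 8) hcos
    have h3 : (∫ ω : S, -(((inner ℝ ξ (φ t (r • (ω : E))) : ℝ)) ^ 2) / 8 ∂πm)
        = -(∫ ω : S, ((inner ℝ ξ (φ t (r • (ω : E))) : ℝ)) ^ 2 ∂πm) / 8 := by
      rw [integral_div, integral_neg]
    have hω₀mem : (‖ξ‖⁻¹ • ξ) ∈ Metric.sphere (0 : E) 1 := by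
      rw [mem_sphere_zero_iff_norm, norm_smul, norm_inv, norm_norm,
        inv_mul_cancel₀ hxi.ne']
    have hnd := hnondeg ⟨‖ξ‖⁻¹ • ξ, hω₀mem⟩ t r ht.1 hr0
    have e1 : ∀ ω : S,
        ((inner ℝ (((⟨‖ξ‖⁻¹ • ξ, hω₀mem⟩ : S) : E)) (φ t (r • (ω : E))) : ℝ)) ^ 2 / r ^ 2
        = ((inner ℝ ξ (φ t (r • (ω : E))) : ℝ)) ^ 2 / (‖ξ‖ ^ 2 * r ^ 2) := by
      intro ω
      have hsm : ((inner ℝ ((‖ξ‖⁻¹ • ξ) : E) (φ t (r • (ω : E))) : ℝ))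
          = ‖ξ‖⁻¹ * ((inner ℝ ξ (φ t (r • (ω : E))) : ℝ)) := real_inner_smul_left _ _ _
      rw [hsm, mul_pow, inv_pow]
      field_simp
    simp only [e1] at hnd
    rw [integral_div] at hnd
    have h4 : c₀ * (‖ξ‖ ^ 2 * r ^ 2)
        ≤ ∫ ω : S, ((inner ℝ ξ (φ t (r • (ω : E))) : ℝ)) ^ 2 ∂πm :=
      (le_div_iff₀ (by positivity)).1 hnd
    have h5 : (∫ ω : S, (Real.cos ((inner ℝ ξ (φ t (r • (ω : E))) : ℝ)) - 1) ∂πm)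
        ≤ -(c₀ * ‖ξ‖ ^ 2 / 8) * r ^ 2 := by
      rw [h3] at h2
      nlinarith
    have h6 := mul_le_mul_of_nonneg_left h5 (Real.rpow_nonneg hr0.le (-1 - α))
    have h7 : r ^ (-1 - α) * r ^ (2:ℕ) = r ^ ((1:ℝ) - α) := by
      rw [← Real.rpow_natCast r 2, ← Real.rpow_add hr0,
        show ((-1 - α) + ((2:ℕ):ℝ)) = 1 - α by push_cast; ring]
    have h8 : r ^ (-1 - α) * (-(c₀ * ‖ξ‖ ^ 2 / 8) * r ^ (2:ℕ))
        = (-(c₀ * ‖ξ‖ ^ 2 / 8)) * r ^ ((1:ℝ) - α) := by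
      rw [← h7]; ring
    calc r ^ (-1 - α) * ∫ ω : S, (Real.cos ((inner ℝ ξ (φ t (r • (ω : E))) : ℝ)) - 1) ∂πm
        ≤ r ^ (-1 - α) * (-(c₀ * ‖ξ‖ ^ 2 / 8) * r ^ 2) := h6
      _ = (-(c₀ * ‖ξ‖ ^ 2 / 8)) * r ^ ((1:ℝ) - α) := h8
  -- Step 3 : evaluate the integral
  have step3 : (∫ r in Set.Ioo (0:ℝ) δ, (-(c₀ * ‖ξ‖ ^ 2 / 8)) * r ^ ((1:ℝ) - α))
      = -(c₀ * ‖ξ‖ ^ 2 / 8 * (δ ^ ((2:ℝ) - α) / (2 - α))) := by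
    rw [integral_const_mul]
    have hval : ∫ r in Set.Ioo (0:ℝ) δ, r ^ ((1:ℝ) - α) = δ ^ ((2:ℝ) - α) / (2 - α) := by
      rw [← integral_Ioc_eq_integral_Ioo, ← intervalIntegral.integral_of_le hδ0.le,
        integral_rpow (Or.inl (by linarith : (-1:ℝ) < 1 - α)),
        Real.zero_rpow (by linarith : (1:ℝ) - α + 1 ≠ 0),
        show (1:ℝ) - α + 1 = 2 - α by ring]
      ring
    rw [hval]
    ring
  calc (∫ r in Set.Ioo (0:ℝ) 1, r ^ (-1 - α) *
        ∫ ω : S, (Real.cos ((inner ℝ ξ (φ t (r • (ω : E))) : ℝ)) - 1) ∂πm)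
      ≤ _ := step1
    _ ≤ _ := step2
    _ = _ := step3
private lemma const_cmp {α c₀ c₁ : ℝ} (hα0 : 0 < α) (hα1 : α < 1) (hc₀ : 0 < c₀)
    (hc₁ : 0 < c₁) {l : ℝ} (hl : 0 < l) :
    min (c₀ * ((1:ℝ)/2) ^ ((2:ℝ) - α) / (8 * (2 - α))) (c₀ * c₁ ^ (α - 2) / (8 * (2 - α)))
        * min (l ^ (2:ℝ)) (l ^ α)
      ≤ c₀ * l ^ 2 / 8 * ((min (1/2 : ℝ) (c₁ * l)⁻¹) ^ ((2:ℝ) - α) / (2 - α)) := by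
  have h2α : (0:ℝ) < 2 - α := by linarith
  have hA0 : 0 < c₀ * ((1:ℝ)/2) ^ ((2:ℝ) - α) / (8 * (2 - α)) := by
    have := Real.rpow_pos_of_pos (show (0:ℝ) < 1/2 by norm_num) ((2:ℝ) - α)
    positivity
  have hB0 : 0 < c₀ * c₁ ^ (α - 2) / (8 * (2 - α)) := by
    have := Real.rpow_pos_of_pos hc₁ (α - 2)
    positivity
  have hmin0 : 0 ≤ min (l ^ (2:ℝ)) (l ^ α) :=
    le_min (Real.rpow_nonneg hl.le _) (Real.rpow_nonneg hl.le _)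
  have hl2 : l ^ (2:ℝ) = l ^ (2:ℕ) := by
    rw [← Real.rpow_natCast l 2]; norm_num
  rcases le_total (c₁ * l) 2 with h | h
  · have hδeq : min (1/2 : ℝ) (c₁ * l)⁻¹ = 1/2 := by
      refine min_eq_left ?_
      have := one_div_le_one_div_of_le (show (0:ℝ) < c₁ * l by positivity) h
      simpa [one_div] using this
    rw [hδeq]
    calc min (c₀ * ((1:ℝ)/2) ^ ((2:ℝ) - α) / (8 * (2 - α))) (c₀ * c₁ ^ (α - 2) / (8 * (2 - α)))
          * min (l ^ (2:ℝ)) (l ^ α)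
        ≤ (c₀ * ((1:ℝ)/2) ^ ((2:ℝ) - α) / (8 * (2 - α))) * l ^ (2:ℝ) :=
          mul_le_mul (min_le_left _ _) (min_le_left _ _) hmin0 hA0.le
      _ = c₀ * l ^ 2 / 8 * (((1:ℝ)/2) ^ ((2:ℝ) - α) / (2 - α)) := by
          rw [hl2]; field_simp
  · have hδeq : min (1/2 : ℝ) (c₁ * l)⁻¹ = (c₁ * l)⁻¹ := by
      refine min_eq_right ?_
      have := one_div_le_one_div_of_le (show (0:ℝ) < 2 by norm_num) h
      simpa [one_div] using this
    rw [hδeq]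
    have hcl : (0:ℝ) < c₁ * l := by positivity
    have e1 : ((c₁ * l)⁻¹) ^ ((2:ℝ) - α) = (c₁ * l) ^ (α - 2) := by
      rw [Real.inv_rpow hcl.le, ← Real.rpow_neg hcl.le, show -((2:ℝ) - α) = α - 2 by ring]
    have e2 : (c₁ * l) ^ (α - 2) = c₁ ^ (α - 2) * l ^ (α - 2) := Real.mul_rpow hc₁.le hl.le
    have e3 : (l ^ (2:ℕ) : ℝ) * l ^ (α - 2) = l ^ α := by
      rw [← hl2, ← Real.rpow_add hl, show (2:ℝ) + (α - 2) = α by ring]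
    calc min (c₀ * ((1:ℝ)/2) ^ ((2:ℝ) - α) / (8 * (2 - α))) (c₀ * c₁ ^ (α - 2) / (8 * (2 - α)))
          * min (l ^ (2:ℝ)) (l ^ α)
        ≤ (c₀ * c₁ ^ (α - 2) / (8 * (2 - α))) * l ^ α :=
          mul_le_mul (min_le_right _ _) (min_le_right _ _) hmin0 hB0.le
      _ = c₀ * l ^ 2 / 8 * (((c₁ * l)⁻¹) ^ ((2:ℝ) - α) / (2 - α)) := by
          rw [e1, e2, ← e3]
          field_simp


/-- Nondegeneracy estimate (3.8) of the paper: for `α ∈ (0,1)` the real part of the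
log-characteristic function `ψ₁(ξ) = ∫₀¹∫_{|z|<1} (e^{iξ·φ(t,z)} − 1) ν(dz) dt`
(written out in polar coordinates `z = rω`) satisfies
`Re ψ₁(ξ) ≤ −c₂ (|ξ|² ∧ |ξ|^α)`. -/
theorem stmt13 (d : ℕ) (α c₀ c₁ : ℝ) (hα0 : 0 < α) (hα1 : α < 1)
    (hc₀ : 0 < c₀) (hc₁ : 0 < c₁)
    (πm : Measure (Metric.sphere (0 : EuclideanSpace ℝ (Fin d)) 1)) [IsFiniteMeasure πm]
    (φ : ℝ → EuclideanSpace ℝ (Fin d) → EuclideanSpace ℝ (Fin d))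
    (hmeas : Measurable (Function.uncurry φ))
    (hgrow : ∀ t z, ‖φ t z‖ ≤ c₁ * ‖z‖)
    (hnondeg : ∀ (ω₀ : Metric.sphere (0 : EuclideanSpace ℝ (Fin d)) 1) (t l : ℝ),
      0 < t → 0 < l →
      c₀ ≤ ∫ ω, ((inner ℝ ((ω₀ : EuclideanSpace ℝ (Fin d)))
          (φ t (l • (ω : EuclideanSpace ℝ (Fin d)))) : ℝ)) ^ 2 / l ^ 2 ∂πm) :
    ∃ c₂ > 0, ∀ ξ : EuclideanSpace ℝ (Fin d),
      (∫ t in Set.Ioc (0 : ℝ) 1, ∫ r in Set.Ioo (0 : ℝ) 1,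
          (r ^ (-1 - α)) •
            ∫ ω, (Complex.exp (Complex.I *
                ((inner ℝ ξ (φ t (r • (ω : EuclideanSpace ℝ (Fin d)))) : ℝ) : ℂ)) - 1)
              ∂πm).re
        ≤ -c₂ * min (‖ξ‖ ^ (2 : ℝ)) (‖ξ‖ ^ α) := by
  have h2α : (0:ℝ) < 2 - α := by linarith
  have hK₁0 : 0 < c₀ * ((1:ℝ)/2) ^ ((2:ℝ) - α) / (8 * (2 - α)) := by
    have := Real.rpow_pos_of_pos (show (0:ℝ) < 1/2 by norm_num) ((2:ℝ) - α)
    positivity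
  have hK₂0 : 0 < c₀ * c₁ ^ (α - 2) / (8 * (2 - α)) := by
    have := Real.rpow_pos_of_pos hc₁ (α - 2)
    positivity
  refine ⟨min (c₀ * ((1:ℝ)/2) ^ ((2:ℝ) - α) / (8 * (2 - α)))
    (c₀ * c₁ ^ (α - 2) / (8 * (2 - α))), lt_min hK₁0 hK₂0, fun ξ => ?_⟩
  by_cases hξ : ξ = 0
  · subst hξ
    simp only [inner_zero_left, Complex.ofReal_zero, mul_zero, Complex.exp_zero, sub_self,
      integral_zero, smul_zero, Complex.zero_re, norm_zero]
    rw [Real.zero_rpow (by norm_num : (2:ℝ) ≠ 0), Real.zero_rpow hα0.ne']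
    simp
  · have hxi : 0 < ‖ξ‖ := by rw [norm_pos_iff]; exact hξ
    have hEq : (∫ t in Set.Ioc (0 : ℝ) 1, ∫ r in Set.Ioo (0 : ℝ) 1,
          (r ^ (-1 - α)) •
            ∫ ω, (Complex.exp (Complex.I *
                ((inner ℝ ξ (φ t (r • (ω : EuclideanSpace ℝ (Fin d)))) : ℝ) : ℂ)) - 1)
              ∂πm).re
        = ∫ t in Set.Ioc (0 : ℝ) 1, ∫ r in Set.Ioo (0 : ℝ) 1, r ^ (-1 - α) *
            ∫ ω, (Real.cos ((inner ℝ ξ (φ t (r • (ω : EuclideanSpace ℝ (Fin d)))) : ℝ)) - 1)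
              ∂πm := by
      rw [← RCLike.re_eq_complex_re, ← integral_re (int_t πm hα0 hα1 ξ φ hmeas hgrow)]
      refine integral_congr_ae (Filter.Eventually.of_forall fun t => ?_)
      rw [RCLike.re_eq_complex_re]
      exact G_re πm hα0 hα1 ξ φ hmeas hgrow hc₁.le t
    rw [hEq]
    calc (∫ t in Set.Ioc (0 : ℝ) 1, ∫ r in Set.Ioo (0 : ℝ) 1, r ^ (-1 - α) *
            ∫ ω, (Real.cos ((inner ℝ ξ (φ t (r • (ω : EuclideanSpace ℝ (Fin d)))) : ℝ)) - 1)
              ∂πm)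
        ≤ ∫ _t in Set.Ioc (0 : ℝ) 1, (-(c₀ * ‖ξ‖ ^ 2 / 8 *
            ((min (1/2 : ℝ) (c₁ * ‖ξ‖)⁻¹) ^ ((2:ℝ) - α) / (2 - α)))) :=
          setIntegral_mono_on (int_t_re πm hα0 hα1 ξ φ hmeas hgrow hc₁.le)
            (integrableOn_const measure_Ioc_lt_top.ne) measurableSet_Ioc
            (fun t ht => key πm hα0 hα1 hc₀ hc₁ φ hmeas hgrow hnondeg ξ hξ ht)
      _ = -(c₀ * ‖ξ‖ ^ 2 / 8 *
            ((min (1/2 : ℝ) (c₁ * ‖ξ‖)⁻¹) ^ ((2:ℝ) - α) / (2 - α))) := by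
          rw [setIntegral_const, Real.volume_real_Ioc]
          norm_num
      _ ≤ -(min (c₀ * ((1:ℝ)/2) ^ ((2:ℝ) - α) / (8 * (2 - α)))
            (c₀ * c₁ ^ (α - 2) / (8 * (2 - α)))) * min (‖ξ‖ ^ (2:ℝ)) (‖ξ‖ ^ α) := by
          have h := const_cmp hα0 hα1 hc₀ hc₁ hxi
          rw [neg_mul]
          linarith

end
end
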